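/- arXiv:2009.07989 — 3 statements merged into one kernel-verified Lean document; each statement's English description precedes it below -/
import Mathlib

section
/- Input totality and determinism of constraints: for every output constraint c = y(b):B:[D] of the component type language and every input port x, there exists exactly one constraint c' such that c --x?--> c'. -/
set_option autoImplicit false

/-! # A formalization of the choice-free Governed Components calculus and its type language -/

abbrev Port := ℕ
abbrev BType := ℕ
abbrev Val := ℕ
abbrev Role := ℕ
abbrev MLabel := ℕ

/-! ## Dependencies, constraints and types -/

/-- A dependency of an output port on an input port: either an initial dependency `x:Ω`
or a per-each-value dependency `x:N`. -/
inductive Dep : Type where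
  | initial : Dep
  | pereach (n : ℕ) : Dep
  deriving DecidableEq

/-- Decrement of a per-each-value dependency count. -/
def Dep.dec : Dep → Dep
  | .initial => .initial
  | .pereach n => .pereach (n - 1)

/-- An output constraint `y(b):B:[D]`: the basic type of emitted values, the boundary
(a natural number or `∞`, modelled as `ℕ∞`), and the (finite-domain) dependency map
assigning to each input port at most one dependency (so port names are pairwise distinct). -/
structure Constraint : Type where
  btype : BType
  bound : ℕ∞
  deps : Port → Option Dep

/-- A type `T = <X_b; C>`: an input interface (input ports annotated with basic types)
and a set of output constraints, at most one per output port. -/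
structure Ty : Type where
  inp : Port → Option BType
  out : Port → Option Constraint

/-- Labels of type transitions: `x?(b)`, `y!(b)` and `τ`. -/
inductive TLabel : Type where
  | inp (x : Port) (b : BType)
  | out (y : Port) (b : BType)
  | tau

/-- Input transitions of constraints, generated by rules [T1], [T2] and [T3]. -/
inductive CStep : Constraint → Port → Constraint → Prop where
  | skip (c : Constraint) (x : Port) :
      c.deps x = none → CStep c x c
  | initial (c : Constraint) (x : Port) :
      c.deps x = some .initial →
      CStep c x ⟨c.btype, c.bound, Function.update c.deps x none⟩
  | pereach (c : Constraint) (x : Port) (n : ℕ) :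
      c.deps x = some (.pereach n) →
      CStep c x ⟨c.btype, c.bound, Function.update c.deps x (some (.pereach (n + 1)))⟩

/-- Transitions of types, generated by rules [T4] (tau), [T5] (input) and [T6] (output). -/
inductive TStep : Ty → TLabel → Ty → Prop where
  | tau (T : Ty) : TStep T .tau T
  | inp (T T' : Ty) (x : Port) (b : BType) :
      T.inp x = some b →
      T'.inp = T.inp →
      (∀ y, (T.out y = none ∧ T'.out y = none) ∨
        ∃ c c', T.out y = some c ∧ T'.out y = some c' ∧ CStep c x c') →
      TStep T (.inp x b) T'
  | out (T T' : Ty) (y : Port) (c : Constraint) :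
      T.out y = some c →
      0 < c.bound →
      (∀ x d, c.deps x = some d → ∃ n : ℕ, d = .pereach n ∧ 1 ≤ n) →
      T'.inp = T.inp →
      T'.out y = some ⟨c.btype, c.bound - 1, fun x => (c.deps x).map Dep.dec⟩ →
      (∀ y', y' ≠ y → T'.out y' = T.out y') →
      TStep T (.out y c.btype) T'

/-! ## Modified types (per-each-value counts may be `∞`) -/

/-- Dependencies of modified types: counts live in `ℕ∞`. -/
inductive MDep : Type where
  | initial : MDep
  | pereach (n : ℕ∞) : MDep

def MDep.dec : MDep → MDep
  | .initial => .initial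
  | .pereach n => .pereach (n - 1)

structure MConstraint : Type where
  btype : BType
  bound : ℕ∞
  deps : Port → Option MDep

structure MTy : Type where
  inp : Port → Option BType
  out : Port → Option MConstraint

inductive MCStep : MConstraint → Port → MConstraint → Prop where
  | skip (c : MConstraint) (x : Port) :
      c.deps x = none → MCStep c x c
  | initial (c : MConstraint) (x : Port) :
      c.deps x = some .initial →
      MCStep c x ⟨c.btype, c.bound, Function.update c.deps x none⟩
  | pereach (c : MConstraint) (x : Port) (n : ℕ∞) :
      c.deps x = some (.pereach n) →
      MCStep c x ⟨c.btype, c.bound, Function.update c.deps x (some (.pereach (n + 1)))⟩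

inductive MTStep : MTy → TLabel → MTy → Prop where
  | tau (T : MTy) : MTStep T .tau T
  | inp (T T' : MTy) (x : Port) (b : BType) :
      T.inp x = some b →
      T'.inp = T.inp →
      (∀ y, (T.out y = none ∧ T'.out y = none) ∨
        ∃ c c', T.out y = some c ∧ T'.out y = some c' ∧ MCStep c x c') →
      MTStep T (.inp x b) T'
  | out (T T' : MTy) (y : Port) (c : MConstraint) :
      T.out y = some c →
      0 < c.bound →
      (∀ x d, c.deps x = some d → ∃ n : ℕ∞, d = .pereach n ∧ 1 ≤ n) →
      T'.inp = T.inp →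
      T'.out y = some ⟨c.btype, c.bound - 1, fun x => (c.deps x).map MDep.dec⟩ →
      (∀ y', y' ≠ y → T'.out y' = T.out y') →
      MTStep T (.out y c.btype) T'

/-- The relation `𝒯' ≤ 𝒯`: there is a (possibly empty) finite sequence of typed input
transitions `𝒯' --x₁?(b₁)--> ⋯ --x_k?(b_k)--> 𝒯`. -/
inductive MLe : MTy → MTy → Prop where
  | refl (T : MTy) : MLe T T
  | step {T T'' T' : MTy} {x : Port} {b : BType} :
      MTStep T (.inp x b) T'' → MLe T'' T' → MLe T T'

/-! ## Forwarders and the modification `𝒯(F,T)` -/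

/-- A forwarder: `fin x' x` forwards an external input `x` to the internal port `x'`;
`fout y y'` forwards the internal output `y'` to the external port `y`. -/
inductive Forwarder : Type where
  | fin (internal external : Port)
  | fout (external internal : Port)
  deriving DecidableEq

/-- `F^i`: the set of internal input ports occurring in a list of forwarders. -/
def inpPorts (F : List Forwarder) : Set Port := {x | ∃ e, Forwarder.fin x e ∈ F}

/-- `F^o`: the set of internal output ports occurring in a list of forwarders. -/
def outPorts (F : List Forwarder) : Set Port := {y | ∃ e, Forwarder.fout e y ∈ F}

def Dep.toMDep : Dep → MDep
  | .initial => .initial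
  | .pereach n => .pereach (n : ℕ∞)

open Classical in
/-- Modification of a constraint: per-each-value dependencies on ports of `Fi` become
unbounded, initial dependencies on ports of `Fi` are dropped; everything else is kept. -/
noncomputable def modifyConstraint (Fi : Set Port) (c : Constraint) : MConstraint where
  btype := c.btype
  bound := c.bound
  deps := fun x =>
    if x ∈ Fi then
      match c.deps x with
      | some (Dep.pereach _) => some (MDep.pereach ⊤)
      | _ => none
    else (c.deps x).map Dep.toMDep

/-- The modified type `𝒯(F,T)`. -/
noncomputable def modifyTy (F : List Forwarder) (T : Ty) : MTy where
  inp := T.inp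
  out := fun y => (T.out y).map (modifyConstraint (inpPorts F))

/-- The canonical embedding of types into modified types. -/
def Ty.toMTy (T : Ty) : MTy where
  inp := T.inp
  out := fun y => (T.out y).map fun c =>
    ⟨c.btype, c.bound, fun x => (c.deps x).map Dep.toMDep⟩

/-! ## Queues of stores and the `count` function -/

/-- A store: a partial mapping from input ports to values. -/
abbrev Store := Port → Option Val

/-- `FIFOat x σs j` says that `j ∈ {0,…,l}` splits the queue for port `x`:
`x` is in the domain of the first `j` stores and in no later store. -/
def FIFOat (x : Port) (σs : List Store) (j : ℕ) : Prop :=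
  j ≤ σs.length ∧
  (∀ i, ∀ h : i < σs.length, i < j → (σs.get ⟨i, h⟩ x).isSome = true) ∧
  (∀ i, ∀ h : i < σs.length, j ≤ i → σs.get ⟨i, h⟩ x = none)

open Classical in
/-- `count x σs`: the index `j` splitting the queue for `x` when it exists, `0` otherwise. -/
noncomputable def count (x : Port) (σs : List Store) : ℕ :=
  if h : ∃ j, FIFOat x σs j then h.choose else 0

/-- Storing a value received on `x`: it is added to the oldest mapping whose domain lacks `x`,
or appended as a new singleton mapping at the tail of the queue. -/
def insertVal (x : Port) (v : Val) : List Store → List Store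
  | [] => [Function.update (fun _ => none) x (some v)]
  | σ :: rest =>
    if (σ x).isSome then σ :: insertVal x v rest
    else Function.update σ x (some v) :: rest

/-! ## Local binders and base components -/

/-- A runtime local binder `y = f(x̃) < σ̃`. -/
structure LocalBinder : Type where
  out : Port
  params : List Port
  fn : List Val → Val
  queue : List Store

/-- Reception of a value by a local binder: binders using `x` store the value,
others discard it. -/
def LocalBinder.recv (b : LocalBinder) (x : Port) (v : Val) : LocalBinder :=
  if x ∈ b.params then { b with queue := insertVal x v b.queue } else b

/-! ## Global and local protocols -/

/-- Choice-free global protocols (with runtime in-transit messages). -/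
inductive Global : Type where
  | comm (p : Role) (l : MLabel) (qs : List Role) (G : Global)
  | transit (v : Val) (l : MLabel) (qs : List Role) (G : Global)
  | mu (X : ℕ) (G : Global)
  | var (X : ℕ)
  | gend

def Global.subst (X : ℕ) (S : Global) : Global → Global
  | .comm p l qs G => .comm p l qs (Global.subst X S G)
  | .transit v l qs G => .transit v l qs (Global.subst X S G)
  | .mu Y G => if X = Y then .mu Y G else .mu Y (Global.subst X S G)
  | .var Y => if X = Y then S else .var Y
  | .gend => .gend

inductive GLabel : Type where
  | out (p : Role) (l : MLabel) (v : Val)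
  | inp (q : Role) (l : MLabel) (v : Val)

/-- Transitions of global protocols. -/
inductive GStep : Global → GLabel → Global → Prop where
  | out {p : Role} {l : MLabel} {qs : List Role} {G : Global} {v : Val} :
      GStep (.comm p l qs G) (.out p l v) (.transit v l qs G)
  | inp {q : Role} {l : MLabel} {qs : List Role} {G : Global} {v : Val} :
      q ∈ qs → qs.erase q ≠ [] →
      GStep (.transit v l qs G) (.inp q l v) (.transit v l (qs.erase q) G)
  | inpLast {q : Role} {l : MLabel} {qs : List Role} {G : Global} {v : Val} :
      qs = [q] →
      GStep (.transit v l qs G) (.inp q l v) G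
  | mu {X : ℕ} {G G' : Global} {α : GLabel} :
      GStep (Global.subst X (.mu X G) G) α G' →
      GStep (.mu X G) α G'

/-- Local protocols. -/
inductive LocalP : Type where
  | recv (x : Port) (b : BType) (L : LocalP)
  | send (y : Port) (b : BType) (L : LocalP)
  | mu (X : ℕ) (L : LocalP)
  | var (X : ℕ)
  | lend

/-- A distribution binder `ℓ : q.x ← p.y`. -/
structure DistBinder : Type where
  lab : MLabel
  receiver : Role
  rport : Port
  sender : Role
  sport : Port
  deriving DecidableEq

def recvPort (D : List DistBinder) (l : MLabel) (q : Role) : Port :=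
  ((D.find? fun d => d.lab == l && d.receiver == q).map DistBinder.rport).getD 0

def sendPort (D : List DistBinder) (l : MLabel) : Port :=
  ((D.find? fun d => d.lab == l).map DistBinder.sport).getD 0

/-- End-point projection of a global protocol to a role, mapping message labels
to ports (via the distribution binders) and to basic types (via `γl`). -/
def project (D : List DistBinder) (γl : MLabel → BType) (r : Role) : Global → LocalP
  | .comm p l qs G =>
    if r = p then .send (sendPort D l) (γl l) (project D γl r G)
    else if r ∈ qs then .recv (recvPort D l r) (γl l) (project D γl r G)
    else project D γl r G
  | .transit _ l qs G =>
    if r ∈ qs then .recv (recvPort D l r) (γl l) (project D γl r G)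
    else project D γl r G
  | .mu X G => .mu X (project D γl r G)
  | .var X => .var X
  | .gend => .lend

/-- `fp(LP)`: the set of ports occurring in a local protocol. -/
def LocalP.ports : LocalP → Set Port
  | .recv x _ L => insert x L.ports
  | .send y _ L => insert y L.ports
  | .mu _ L => L.ports
  | .var _ => ∅
  | .lend => ∅

/-- `rep(LP)`: the set of ports occurring inside a recursion. -/
def LocalP.repPorts : LocalP → Set Port
  | .recv _ _ L => L.repPorts
  | .send _ _ L => L.repPorts
  | .mu _ L => L.ports
  | .var _ => ∅
  | .lend => ∅

/-- `InCtx Q LP`: `LP = C[LP']` for some recursion-free context `C` and some `LP'` with `Q LP'`. -/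
inductive InCtx (Q : LocalP → Prop) : LocalP → Prop where
  | here {L : LocalP} : Q L → InCtx Q L
  | recv {x : Port} {b : BType} {L : LocalP} : InCtx Q L → InCtx Q (.recv x b L)
  | send {y : Port} {b : BType} {L : LocalP} : InCtx Q L → InCtx Q (.send y b L)

/-- Like `InCtx`, but the context may not mention ports from `A`. -/
inductive InCtxAvoid (A : Set Port) (Q : LocalP → Prop) : LocalP → Prop where
  | here {L : LocalP} : Q L → InCtxAvoid A Q L
  | recv {x : Port} {b : BType} {L : LocalP} :
      x ∉ A → InCtxAvoid A Q L → InCtxAvoid A Q (.recv x b L)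
  | send {y : Port} {b : BType} {L : LocalP} :
      y ∉ A → InCtxAvoid A Q L → InCtxAvoid A Q (.send y b L)

def headRecv (x' : Port) : LocalP → Prop := fun L => ∃ b L', L = .recv x' b L'

/-- `y' ⟨LP,1⟩ x'`: a non-repetitive output on `y'` precedes a non-repetitive input on `x'`. -/
def rel1 (LP : LocalP) (y' x' : Port) : Prop :=
  InCtx (fun L => ∃ b L₂, L = .send y' b L₂ ∧ InCtx (headRecv x') L₂) LP ∧
  x' ∉ LP.repPorts ∧ y' ∉ LP.repPorts

/-- `y' ⟨LP,2⟩ x'`: a non-repetitive output on `y'` precedes a repetitive input on `x'`. -/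
def rel2 (LP : LocalP) (y' x' : Port) : Prop :=
  InCtx (fun L => ∃ b L₂, L = .send y' b L₂ ∧
    InCtx (fun L₃ => ∃ X L₄, L₃ = .mu X L₄ ∧ InCtx (headRecv x') L₄) L₂) LP ∧
  y' ∉ LP.repPorts

/-- `y' ⟨LP,3⟩ x'`: a repetitive output on `y'` precedes a repetitive input on `x'`. -/
def rel3 (LP : LocalP) (y' x' : Port) : Prop :=
  InCtx (fun L => ∃ X L₂, L = .mu X L₂ ∧
    InCtx (fun L₃ => ∃ b L₄, L₃ = .send y' b L₄ ∧ InCtx (headRecv x') L₄) L₂) LP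

/-- `vf(LP,x',y')`: a value is flowing from `y'` to `x'` in `LP`. -/
def ValueFlowing (LP : LocalP) (x' y' : Port) : Prop :=
  rel3 LP y' x' ∧ InCtxAvoid {x', y'} (headRecv x') LP

open Classical in
noncomputable def vfNum (LP : LocalP) (x' y' : Port) : ℕ :=
  if ValueFlowing LP x' y' then 1 else 0

/-! ## Extraction for composite components -/

/-- Direct dependencies `D_d`. -/
def DirectDep (C : Port → Option Constraint) (Fi Fo : Set Port)
    (y x : Port) (M : Dep) : Prop :=
  ∃ c, C y = some c ∧ c.deps x = some M ∧ x ∈ Fi ∧ y ∈ Fo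

/-- The condition `η` of the definition of transitive dependencies: the internal
constraints declare a dependency of `y` on `x'` (of kind `M'`) and of `y'` on `x`
(of kind `M`), with `x` external input and `y` external output. -/
def Eta (C : Port → Option Constraint) (Fi Fo : Set Port)
    (y x y' x' : Port) (M M' : Dep) : Prop :=
  (∃ c, C y = some c ∧ c.deps x' = some M') ∧
  (∃ c', C y' = some c' ∧ c'.deps x = some M) ∧
  x ∈ Fi ∧ y ∈ Fo

/-- Transitive dependencies `D_t`. -/
inductive TransDep (C : Port → Option Constraint) (Fi Fo : Set Port) (LP : LocalP)
    (y : Port) : Port → Dep → Prop where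
  | init12 {x y' x' : Port} {M M' : Dep} :
      Eta C Fi Fo y x y' x' M M' →
      (rel1 LP y' x' ∨ rel2 LP y' x') →
      (M = .initial ∨ M = .pereach 0) →
      TransDep C Fi Fo LP y x .initial
  | init3a {x y' x' : Port} {M' : Dep} :
      Eta C Fi Fo y x y' x' .initial M' →
      rel3 LP y' x' →
      TransDep C Fi Fo LP y x .initial
  | init3b {x y' x' : Port} :
      Eta C Fi Fo y x y' x' (.pereach 0) .initial →
      rel3 LP y' x' →
      ¬ ValueFlowing LP x' y' →
      TransDep C Fi Fo LP y x .initial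
  | each3 {x y' x' : Port} {N N' : ℕ} :
      Eta C Fi Fo y x y' x' (.pereach N) (.pereach N') →
      rel3 LP y' x' →
      TransDep C Fi Fo LP y x (.pereach (N + N' + vfNum LP x' y'))

def AnyDep (C : Port → Option Constraint) (Fi Fo : Set Port) (LP : LocalP)
    (y x : Port) (M : Dep) : Prop :=
  DirectDep C Fi Fo y x M ∨ TransDep C Fi Fo LP y x M

/-- The prioritised union `pr(D_d ∪ D_t)` of direct and transitive dependencies,
as the specification of the extracted dependency of `y` on `x`. -/
def FinalDep (C : Port → Option Constraint) (Fi Fo : Set Port) (LP : LocalP)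
    (y x : Port) (d : Option Dep) : Prop :=
  (∃ N, d = some (.pereach N) ∧ AnyDep C Fi Fo LP y x (.pereach N)) ∨
  (d = some .initial ∧ AnyDep C Fi Fo LP y x .initial ∧
    ¬ ∃ N, AnyDep C Fi Fo LP y x (.pereach N)) ∨
  (d = none ∧ ¬ ∃ M, AnyDep C Fi Fo LP y x M)

/-- The candidate boundaries `{B} ∪ B₁ ∪ B₂ ∪ B₃` for an output port with internal
constraint `c` in local protocol `LP`. -/
def boundSet (c : Constraint) (LP : LocalP) (Fi : Set Port) : Set ℕ∞ :=
  {c.bound} ∪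
  {b | ∃ x' N, c.deps x' = some (.pereach N) ∧ x' ∉ LP.ports ∧ x' ∉ Fi ∧ b = (N : ℕ∞)} ∪
  {b | ∃ x', c.deps x' = some .initial ∧ x' ∉ LP.ports ∧ x' ∉ Fi ∧ b = 0} ∪
  {b | ∃ x' N, c.deps x' = some (.pereach N) ∧ x' ∈ LP.ports ∧ x' ∉ LP.repPorts ∧
        x' ∉ Fi ∧ b = (N : ℕ∞) + 1}

/-- The final boundary `B(y,LP,C)` (the minimum of the candidate boundaries). -/
noncomputable def boundOf (c : Constraint) (LP : LocalP) (Fi : Set Port) : ℕ∞ :=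
  sInf (boundSet c LP Fi)

/-- Type extraction for a composite component (Definition 5.2), relative to the type `Tr`
of the interfacing subcomponent, its local protocol `LP`, and the forwarders `F`
(the renaming via `F` is built in). -/
structure ExtractsComposite (Tr : Ty) (LP : LocalP) (F : List Forwarder) (T : Ty) : Prop where
  inp_iff : ∀ xe b, T.inp xe = some b ↔
    ∃ xi, Forwarder.fin xi xe ∈ F ∧ Tr.inp xi = some b
  out_iff : ∀ ye c, T.out ye = some c ↔
    ∃ yi ci, Forwarder.fout ye yi ∈ F ∧ Tr.out yi = some ci ∧
      c.btype = ci.btype ∧ c.bound = boundOf ci LP (inpPorts F) ∧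
      (∀ xe xi, Forwarder.fin xi xe ∈ F →
        FinalDep Tr.out (inpPorts F) (outPorts F) LP yi xi (c.deps xe)) ∧
      (∀ xe, (¬ ∃ xi, Forwarder.fin xi xe ∈ F) → c.deps xe = none)

/-! ## Conformance -/

/-- Conformance `Γ ⊢ 𝒯 ⋈ LP` between a modified type and a local protocol. -/
inductive Conf : (ℕ → Option MTy) → MTy → LocalP → Prop where
  | inp {Γ : ℕ → Option MTy} {T T' : MTy} {x : Port} {b : BType} {LP : LocalP} :
      MTStep T (.inp x b) T' → Conf Γ T' LP → Conf Γ T (.recv x b LP)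
  | out {Γ : ℕ → Option MTy} {T T' : MTy} {y : Port} {b : BType} {LP : LocalP} :
      MTStep T (.out y b) T' → Conf Γ T' LP → Conf Γ T (.send y b LP)
  | lend {Γ : ℕ → Option MTy} {T : MTy} : Conf Γ T .lend
  | var {Γ : ℕ → Option MTy} {T T' : MTy} {X : ℕ} :
      Γ X = some T' → MLe T' T → Conf Γ T (.var X)
  | mu {Γ : ℕ → Option MTy} {T : MTy} {X : ℕ} {LP : LocalP} :
      Conf (Function.update Γ X (some T)) T LP → Conf Γ T (.mu X LP)

/-! ## Components and their semantics -/

/-- Components of the (choice-free) Governed Components calculus. -/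
inductive Component : Type where
  | base (xs ys : List Port) (L : List LocalBinder)
  | comp (xs ys : List Port) (G : Global) (R : List (Role × Component))
      (D : List DistBinder) (r : Role) (F : List Forwarder)

/-- Labels of component transitions: `x?v`, `y!v` and `τ`. -/
inductive CLabel : Type where
  | inp (x : Port) (v : Val)
  | out (y : Port) (v : Val)
  | tau

/-- The labelled transition semantics of components. -/
inductive Step : Component → CLabel → Component → Prop where
  | baseInp {xs ys : List Port} {L : List LocalBinder} {x : Port} {v : Val} :
      x ∈ xs →
      Step (.base xs ys L) (.inp x v) (.base xs ys (L.map fun b => b.recv x v))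
  | baseOut {xs ys : List Port} {L₁ L₂ : List LocalBinder} {bd : LocalBinder}
      {σ₁ : Store} {rest : List Store} :
      bd.queue = σ₁ :: rest →
      (∀ x ∈ bd.params, (σ₁ x).isSome = true) →
      bd.out ∈ ys →
      Step (.base xs ys (L₁ ++ bd :: L₂))
        (.out bd.out (bd.fn (bd.params.map fun x => (σ₁ x).getD 0)))
        (.base xs ys (L₁ ++ { bd with queue := rest } :: L₂))
  | compOut {xs ys : List Port} {G : Global} {R₁ R₂ : List (Role × Component)}
      {Dd : List DistBinder} {r : Role} {F : List Forwarder}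
      {K K' : Component} {z y : Port} {v : Val} :
      Step K (.out z v) K' → Forwarder.fout y z ∈ F → y ∈ ys →
      Step (.comp xs ys G (R₁ ++ (r, K) :: R₂) Dd r F) (.out y v)
        (.comp xs ys G (R₁ ++ (r, K') :: R₂) Dd r F)
  | compInp {xs ys : List Port} {G : Global} {R₁ R₂ : List (Role × Component)}
      {Dd : List DistBinder} {r : Role} {F : List Forwarder}
      {K K' : Component} {z x : Port} {v : Val} :
      Step K (.inp z v) K' → Forwarder.fin z x ∈ F → x ∈ xs →
      Step (.comp xs ys G (R₁ ++ (r, K) :: R₂) Dd r F) (.inp x v)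
        (.comp xs ys G (R₁ ++ (r, K') :: R₂) Dd r F)
  | internal {xs ys : List Port} {G : Global} {R₁ R₂ : List (Role × Component)}
      {Dd : List DistBinder} {r s : Role} {F : List Forwarder} {K K' : Component} :
      Step K .tau K' →
      Step (.comp xs ys G (R₁ ++ (s, K) :: R₂) Dd r F) .tau
        (.comp xs ys G (R₁ ++ (s, K') :: R₂) Dd r F)
  | outChor {xs ys : List Port} {G G' : Global} {R₁ R₂ : List (Role × Component)}
      {Dd : List DistBinder} {r p q : Role} {F : List Forwarder}
      {K K' : Component} {u z : Port} {l : MLabel} {v : Val} :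
      Step K (.out u v) K' →
      (⟨l, q, z, p, u⟩ : DistBinder) ∈ Dd →
      GStep G (.out p l v) G' →
      Step (.comp xs ys G (R₁ ++ (p, K) :: R₂) Dd r F) .tau
        (.comp xs ys G' (R₁ ++ (p, K') :: R₂) Dd r F)
  | inpChor {xs ys : List Port} {G G' : Global} {R₁ R₂ : List (Role × Component)}
      {Dd : List DistBinder} {r p q : Role} {F : List Forwarder}
      {K K' : Component} {u z : Port} {l : MLabel} {v : Val} :
      Step K (.inp z v) K' →
      (⟨l, q, z, p, u⟩ : DistBinder) ∈ Dd →
      GStep G (.inp q l v) G' →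
      Step (.comp xs ys G (R₁ ++ (q, K) :: R₂) Dd r F) .tau
        (.comp xs ys G' (R₁ ++ (q, K') :: R₂) Dd r F)

/-- A finite sequence of internal steps. -/
def TauSteps : Component → Component → Prop :=
  Relation.ReflTransGen (fun A B => Step A .tau B)

/-- The weak transition `K ==α==> K'`: internal steps, then `α`, then internal steps. -/
def WeakStep (K : Component) (α : CLabel) (K' : Component) : Prop :=
  ∃ K₁ K₂, TauSteps K K₁ ∧ Step K₁ α K₂ ∧ TauSteps K₂ K'

/-! ## Type extraction for base components (Definition 5.1) -/

/-- `T` is the type extracted from the base component `[xs > ys]{L}` via the consistent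
basic-type assignment `γ` (relative to the typing `valTy` of values). -/
structure ExtractsBase (valTy : Val → BType) (γ : Port → BType)
    (xs ys : List Port) (L : List LocalBinder) (T : Ty) : Prop where
  /-- every binder defines a declared output port and uses declared input ports -/
  binder_ports : ∀ bd ∈ L, bd.out ∈ ys ∧ ∀ x ∈ bd.params, x ∈ xs
  /-- every output port has a local binder -/
  ports_binder : ∀ y ∈ ys, ∃ bd ∈ L, bd.out = y
  /-- at most one binder per output port -/
  unique : ∀ bd ∈ L, ∀ bd' ∈ L, bd.out = bd'.out → bd = bd'
  params_nodup : ∀ bd ∈ L, bd.params.Nodup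
  /-- stores only mention parameter ports -/
  queue_dom : ∀ bd ∈ L, ∀ σ ∈ bd.queue, ∀ x, (σ x).isSome = true → x ∈ bd.params
  /-- queues satisfy the FIFO invariant for every parameter port -/
  queue_fifo : ∀ bd ∈ L, ∀ x ∈ bd.params, ∃ j, FIFOat x bd.queue j
  /-- stored values are well-typed -/
  queue_typed : ∀ bd ∈ L, ∀ σ ∈ bd.queue, ∀ x v, σ x = some v → valTy v = γ x
  /-- the functions of the binders have the function types prescribed by `γ` -/
  fn_typed : ∀ bd ∈ L, ∀ args : List Val, args.length = bd.params.length →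
    (∀ i : ℕ, ∀ h₁ : i < args.length, ∀ h₂ : i < bd.params.length,
      valTy (args.get ⟨i, h₁⟩) = γ (bd.params.get ⟨i, h₂⟩)) →
    valTy (bd.fn args) = γ bd.out
  /-- the input interface of the extracted type -/
  inp_iff : ∀ x b, T.inp x = some b ↔ (x ∈ xs ∧ b = γ x)
  /-- the constraints of the extracted type -/
  out_iff : ∀ y c, T.out y = some c ↔
    ∃ bd ∈ L, bd.out = y ∧ c.btype = γ y ∧ c.bound = ⊤ ∧
      ∀ x, c.deps x =
        if x ∈ bd.params then some (.pereach (count x bd.queue)) else none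

/-! ## Well-typedness `K ⇓ T` -/

/-- Well-typedness of components: `WT valTy γl K T` formalizes `K ⇓ T`
(relative to the typing `valTy` of values and the basic types `γl` of message labels). -/
inductive WT (valTy : Val → BType) (γl : MLabel → BType) : Component → Ty → Prop where
  | base {xs ys : List Port} {L : List LocalBinder} {T : Ty} (γ : Port → BType) :
      ExtractsBase valTy γ xs ys L T →
      WT valTy γl (.base xs ys L) T
  | comp {xs ys : List Port} {G : Global} {R : List (Role × Component)}
      {Dd : List DistBinder} {r : Role} {F : List Forwarder} {K : Component} {T : Ty}
      (Tass : Role → Ty) :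
      (r, K) ∈ R →
      (∀ ri Ki, (ri, Ki) ∈ R → WT valTy γl Ki (Tass ri)) →
      (∀ ri Ki, (ri, Ki) ∈ R →
        Conf (fun _ => none) (modifyTy F (Tass ri)) (project Dd γl ri G)) →
      ExtractsComposite (Tass r) (project Dd γl r G) F T →
      WT valTy γl (.comp xs ys G R Dd r F) T

/-! ## Statement: input totality and determinism of constraints -/

/-- For every output constraint `c` and every input port `x` there is exactly one
constraint `c'` with `c --x?--> c'`. -/
theorem constraint_input_total_det (c : Constraint) (x : Port) :
    ∃! c', CStep c x c' := by
  match h : c.deps x with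
  | none =>
    exact ⟨c, .skip c x h, fun c' hs => by
      cases hs with
      | skip => rfl
      | initial h' => simp [h] at h'
      | pereach _ h' => simp [h] at h'⟩
  | some .initial =>
    refine ⟨⟨c.btype, c.bound, Function.update c.deps x none⟩, .initial c x h,
      fun c' hs => ?_⟩
    cases hs with
    | skip h' => simp [h] at h'
    | initial => rfl
    | pereach _ h' => simp [h] at h'
  | some (.pereach n) =>
    refine ⟨⟨c.btype, c.bound, Function.update c.deps x (some (.pereach (n + 1)))⟩,
      .pereach c x n h, fun c' hs => ?_⟩
    cases hs with
    | skip h' => simp [h] at h'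
    | initial h' => simp [h] at h'
    | pereach m h' => rw [h] at h'; cases h'; rfl
end

section
/- Modified types simulate type inputs: let T be a type, F a list of forwarders with internal input-port set F^i, and 𝒯(F,T) the modified type obtained from T by replacing every per-each-value dependency x:M with x ∈ F^i by x:∞ and deleting every initial dependency x:Ω with x ∈ F^i. If T --x?(b)--> T', then 𝒯(F,T) --x?(b)--> 𝒯(F,T'). -/
set_option autoImplicit false

/-! ## Statement: modified types simulate type inputs -/

lemma modifyConstraint_cstep (Fi : Set Port) {c c' : Constraint} {x : Port}
    (h : CStep c x c') :
    MCStep (modifyConstraint Fi c) x (modifyConstraint Fi c') := by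
  classical
  cases h with
  | skip hx =>
    exact MCStep.skip _ x (by simp [modifyConstraint, hx])
  | initial hx =>
    by_cases hFi : x ∈ Fi
    · have heq : modifyConstraint Fi ⟨c.btype, c.bound, Function.update c.deps x none⟩
          = modifyConstraint Fi c := by
        simp only [modifyConstraint]
        congr 1
        funext z
        by_cases hz : z = x
        · subst hz; simp [hFi, hx]
        · simp [Function.update_of_ne hz]
      rw [heq]
      exact MCStep.skip _ x (by simp [modifyConstraint, hFi, hx])
    · have hx' : (modifyConstraint Fi c).deps x = some .initial := by
        simp [modifyConstraint, hFi, hx, Dep.toMDep]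
      have hd : Function.update (modifyConstraint Fi c).deps x none
          = (modifyConstraint Fi ⟨c.btype, c.bound, Function.update c.deps x none⟩).deps := by
        funext z
        by_cases hz : z = x
        · subst hz; simp [modifyConstraint, hFi]
        · simp [modifyConstraint, Function.update_of_ne hz]
      have := MCStep.initial (modifyConstraint Fi c) x hx'
      rw [hd] at this
      exact this
  | pereach n hx =>
    by_cases hFi : x ∈ Fi
    · have hx' : (modifyConstraint Fi c).deps x = some (.pereach ⊤) := by
        simp [modifyConstraint, hFi, hx]
      have hd : Function.update (modifyConstraint Fi c).deps x (some (.pereach (⊤ + 1)))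
          = (modifyConstraint Fi ⟨c.btype, c.bound,
              Function.update c.deps x (some (.pereach (n + 1)))⟩).deps := by
        funext z
        by_cases hz : z = x
        · subst hz; simp [modifyConstraint, hFi, top_add]
        · simp [modifyConstraint, Function.update_of_ne hz]
      have := MCStep.pereach (modifyConstraint Fi c) x ⊤ hx'
      rw [hd] at this
      exact this
    · have hx' : (modifyConstraint Fi c).deps x = some (.pereach (n : ℕ∞)) := by
        simp [modifyConstraint, hFi, hx, Dep.toMDep]
      have hd : Function.update (modifyConstraint Fi c).deps x (some (.pereach ((n : ℕ∞) + 1)))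
          = (modifyConstraint Fi ⟨c.btype, c.bound,
              Function.update c.deps x (some (.pereach (n + 1)))⟩).deps := by
        funext z
        by_cases hz : z = x
        · subst hz
          simp [modifyConstraint, hFi, Dep.toMDep]
        · simp [modifyConstraint, Function.update_of_ne hz]
      have := MCStep.pereach (modifyConstraint Fi c) x (n : ℕ∞) hx'
      rw [hd] at this
      exact this

/-- If `T --x?(b)--> T'` then `𝒯(F,T) --x?(b)--> 𝒯(F,T')`. -/
theorem modify_sim_input (T T' : Ty) (F : List Forwarder) (x : Port) (b : BType)
    (h : TStep T (.inp x b) T') :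
    MTStep (modifyTy F T) (.inp x b) (modifyTy F T') := by
  cases h with
  | inp _ _ _ hinp hinp' hout =>
    refine MTStep.inp _ _ x b (by simpa [modifyTy] using hinp) (by simp [modifyTy, hinp']) ?_
    intro y
    rcases hout y with ⟨h1, h2⟩ | ⟨c, c', hc, hc', hstep⟩
    · exact Or.inl ⟨by simp [modifyTy, h1], by simp [modifyTy, h2]⟩
    · exact Or.inr ⟨modifyConstraint (inpPorts F) c, modifyConstraint (inpPorts F) c',
        by simp [modifyTy, hc], by simp [modifyTy, hc'],
        modifyConstraint_cstep _ hstep⟩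
end

section
/- Modified types simulate type outputs: let T be a type, F a list of forwarders with internal input-port set F^i, and 𝒯(F,T) the modified type obtained from T by replacing every per-each-value dependency x:M with x ∈ F^i by x:∞ and deleting every initial dependency x:Ω with x ∈ F^i. If T --y!(b)--> T', then 𝒯(F,T) --y!(b)--> 𝒯(F,T'). -/
set_option autoImplicit false

/-! ## Statement: modified types simulate type outputs -/

/-- If `T --y!(b)--> T'` then `𝒯(F,T) --y!(b)--> 𝒯(F,T')`. -/
theorem modify_sim_output (T T' : Ty) (F : List Forwarder) (y : Port) (b : BType)
    (h : TStep T (.out y b) T') :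
    MTStep (modifyTy F T) (.out y b) (modifyTy F T') := by
  cases h with
  | out _ _ c hTy hb hdeps hinp hTy' hother =>
    refine MTStep.out _ _ y (modifyConstraint (inpPorts F) c) ?_ ?_ ?_ ?_ ?_ ?_
    · simp [modifyTy, hTy]
    · exact hb
    · intro x d hd
      simp only [modifyConstraint] at hd
      split at hd
      · -- x ∈ Fi
        rcases hc : c.deps x with _ | d'
        · rw [hc] at hd; simp at hd
        · rw [hc] at hd
          cases d' with
          | initial => simp at hd
          | pereach m =>
            simp at hd
            exact ⟨⊤, hd.symm, le_top⟩
      · -- x ∉ Fi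
        rcases hc : c.deps x with _ | d'
        · rw [hc] at hd; simp at hd
        · rw [hc] at hd
          simp at hd
          obtain ⟨n, rfl, hn⟩ := hdeps x d' hc
          refine ⟨(n : ℕ∞), ?_, ?_⟩
          · rw [← hd]; rfl
          · exact_mod_cast hn
    · simp [modifyTy, hinp]
    · simp only [modifyTy, hTy', Option.map_some]
      congr 1
      simp only [modifyConstraint, MConstraint.mk.injEq, true_and]
      funext x
      by_cases hx : x ∈ inpPorts F
      · simp only [hx, if_true]
        rcases hc : c.deps x with _ | d'
        · simp
        · cases d' with
          | initial => simp [Dep.dec, MDep.dec]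
          | pereach m => simp [Dep.dec, MDep.dec]
      · simp only [hx, if_false]
        rcases hc : c.deps x with _ | d'
        · simp
        · cases d' with
          | initial => simp [Dep.dec, MDep.dec, Dep.toMDep]
          | pereach m =>
            have hm : (↑(m - 1) : ℕ∞) = (m : ℕ∞) - 1 := by
              exact_mod_cast (ENat.coe_sub m 1)
            simp [Dep.dec, MDep.dec, Dep.toMDep, hm]
    · intro y' hy'
      simp [modifyTy, hother y' hy']
end
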